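/- arXiv:2102.05475 — 2 statements merged into one kernel-verified Lean document; each statement's English description precedes it below -/
import Mathlib

section
/- For every ε ∈ (0,1/32), every process on I_ε with Σ_{i ∈ I_ε} p_i^1 = 1, and every step t: if δ_{+,−}^t ≥ (1/(2B_ε)) · Σ_{j ∈ I_ε⁺} p_j^t and W_t ≥ 16 · ε · B_ε, then W_{t+1} ≤ (1 − 1/(9B_ε)) · W_t. -/
/-- `B_ε := 2⌈log₂(1/ε)⌉ + 1`. -/
noncomputable def Bval (ε : ℝ) : ℤ := 2 * ⌈Real.logb 2 (1 / ε)⌉ + 1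

/-- `I_ε`: the odd integers `i` with `-B_ε ≤ i ≤ B_ε`. -/
noncomputable def Iset (ε : ℝ) : Finset ℤ :=
  (Finset.Icc (-(Bval ε)) (Bval ε)).filter (fun i => Odd i)

/-- `I_ε⁺ := I_ε ∩ {i > 0}`. -/
noncomputable def Ipos (ε : ℝ) : Finset ℤ := (Iset ε).filter (fun i => 0 < i)

/-- `I_ε⁻ := I_ε ∩ {i < 0}`. -/
noncomputable def Ineg (ε : ℝ) : Finset ℤ := (Iset ε).filter (fun i => i < 0)

/-- A process on `I_ε` (Definition 4 of the paper): at each step `t ≥ 1` and each `i ∈ I_ε`,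
an amount `q t i` with `0 ≤ q t i ≤ p t i` of the weight `p t i` moves to position `i - 2`
and the remaining `p t i - q t i` moves to position `i + 2`, clamped to stay in `[-B_ε, B_ε]`;
`p (t+1) i` is the total weight arriving at `i`.  Moreover:
(i) at every step at least `15/16` of the mass on `I_ε⁺` moves down, and
(ii) for every `i ∈ I_ε⁻` whose mass is at least `(1/B_ε⁴) Σ_{j ∈ I_ε⁺} p t j`,
at most `1/16` of the weight at `i` moves up. -/
structure MProcess (ε : ℝ) where
  p : ℕ → ℤ → ℝ
  q : ℕ → ℤ → ℝ
  q_nonneg : ∀ t i, 0 ≤ q t i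
  q_le_p : ∀ t i, q t i ≤ p t i
  update : ∀ t, 1 ≤ t → ∀ i ∈ Iset ε,
    p (t + 1) i =
      (∑ j ∈ (Iset ε).filter (fun j => max (j - 2) (-(Bval ε)) = i), q t j) +
      (∑ j ∈ (Iset ε).filter (fun j => min (j + 2) (Bval ε) = i), (p t j - q t j))
  mass_down : ∀ t, 1 ≤ t →
    (15 / 16 : ℝ) * ∑ i ∈ Ipos ε, p t i ≤ ∑ i ∈ Ipos ε, q t i
  up_small : ∀ t, 1 ≤ t → ∀ i ∈ Ineg ε,
    (1 / (Bval ε : ℝ) ^ 4) * (∑ j ∈ Ipos ε, p t j) ≤ p t i →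
    p t i - q t i ≤ (1 / 16 : ℝ) * p t i

/-- `W_t := Σ_{i ∈ I_ε⁻} 2^i p_i^t + Σ_{i ∈ I_ε⁺} p_i^t`. -/
noncomputable def Wfun (ε : ℝ) (P : MProcess ε) (t : ℕ) : ℝ :=
  (∑ i ∈ Ineg ε, (2 : ℝ) ^ i * P.p t i) + ∑ i ∈ Ipos ε, P.p t i

/-!
`W_{t+1}` is the sum over positions `j` of the weight carried by the mass at `j`. On the positive
side only the mass moving from `+1` to `-1` changes weight, and it halves, saving at least
`S / (4B)` where `S` is the positive mass. On the negative side a heavy position sends at least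
`15/16` of its mass down, where the weight is divided by `4`, and at most `1/16` up, where it is
multiplied by at most `4`, so its contribution halves; light positions contribute at most
`2S / B⁴` each, and the bottom position `-B`, whose mass cannot move down, contributes at most
`4 · 2^{-B} ≤ 2ε²`, which is negligible against `W_t ≥ 16εB`.
-/

open Finset

noncomputable def weight (i : ℤ) : ℝ := if i < 0 then 2 ^ i else 1

lemma weight_of_neg {i : ℤ} (hi : i < 0) : weight i = 2 ^ i := if_pos hi

lemma weight_of_nonneg {i : ℤ} (hi : 0 ≤ i) : weight i = 1 := if_neg hi.not_gt

lemma weight_mono : Monotone weight := by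
  intro i j hij
  rcases lt_or_ge j 0 with hj | hj
  · rw [weight_of_neg hj, weight_of_neg (hij.trans_lt hj)]
    exact zpow_le_zpow_right₀ one_le_two hij
  · rw [weight_of_nonneg hj]
    rcases lt_or_ge i 0 with hi | hi
    · rw [weight_of_neg hi]; exact zpow_le_one_of_nonpos₀ one_le_two hi.le
    · rw [weight_of_nonneg hi]

lemma weight_add_two_le (i : ℤ) : weight (i + 2) ≤ 4 * weight i := by
  rcases lt_or_ge i 0 with hi | hi
  · calc weight (i + 2) ≤ 2 ^ (i + 2) := by
          rcases lt_or_ge (i + 2) 0 with h | h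
          · rw [weight_of_neg h]
          · rw [weight_of_nonneg h]; exact one_le_zpow₀ one_le_two h
      _ = 4 * weight i := by
          rw [weight_of_neg hi, zpow_add₀ two_ne_zero]; norm_num; ring
  · rw [weight_of_nonneg hi, weight_of_nonneg (by omega)]; norm_num

lemma weight_sub_two {i : ℤ} (hi : i < 0) : weight (i - 2) = weight i / 4 := by
  rw [weight_of_neg hi, weight_of_neg (by omega), zpow_sub₀ two_ne_zero]; norm_num

lemma odd_Bval (ε : ℝ) : Odd (Bval ε) := ⟨⌈Real.logb 2 (1 / ε)⌉, rfl⟩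

lemma mem_Iset_iff {ε : ℝ} {i : ℤ} : i ∈ Iset ε ↔ -Bval ε ≤ i ∧ i ≤ Bval ε ∧ Odd i := by
  simp [Iset, and_assoc]

lemma mem_Ipos_iff {ε : ℝ} {i : ℤ} : i ∈ Ipos ε ↔ i ∈ Iset ε ∧ 0 < i := mem_filter

lemma mem_Ineg_iff {ε : ℝ} {i : ℤ} : i ∈ Ineg ε ↔ i ∈ Iset ε ∧ i < 0 := mem_filter

lemma max_sub_two_mem_Iset {ε : ℝ} {j : ℤ} (hj : j ∈ Iset ε) :
    max (j - 2) (-Bval ε) ∈ Iset ε := by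
  obtain ⟨hlo, hhi, k, rfl⟩ := mem_Iset_iff.1 hj
  obtain ⟨m, hm⟩ := odd_Bval ε
  refine mem_Iset_iff.2 ⟨le_max_right _ _, max_le (by omega) (by omega), ?_⟩
  rcases max_cases (2 * k + 1 - 2) (-Bval ε) with ⟨h, -⟩ | ⟨h, -⟩ <;> rw [h]
  · exact ⟨k - 1, by ring⟩
  · exact ⟨-m - 1, by omega⟩

lemma min_add_two_mem_Iset {ε : ℝ} {j : ℤ} (hj : j ∈ Iset ε) :
    min (j + 2) (Bval ε) ∈ Iset ε := by
  obtain ⟨hlo, hhi, k, rfl⟩ := mem_Iset_iff.1 hj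
  refine mem_Iset_iff.2 ⟨le_min (by omega) (by omega), min_le_right _ _, ?_⟩
  rcases min_cases (2 * k + 1 + 2) (Bval ε) with ⟨h, -⟩ | ⟨h, -⟩ <;> rw [h]
  · exact ⟨k + 1, by ring⟩
  · exact odd_Bval ε

lemma sum_Iset_eq_sum_Ineg_add_sum_Ipos (ε : ℝ) (f : ℤ → ℝ) :
    ∑ i ∈ Iset ε, f i = ∑ i ∈ Ineg ε, f i + ∑ i ∈ Ipos ε, f i := by
  rw [Ineg, Ipos, ← sum_filter_add_sum_filter_not (Iset ε) (· < 0)]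
  congr 1
  refine sum_congr (filter_congr fun i hi => ?_) fun _ _ => rfl
  obtain ⟨-, -, k, rfl⟩ := mem_Iset_iff.1 hi
  omega

lemma one_mem_Ipos {ε : ℝ} (hB : 1 ≤ Bval ε) : (1 : ℤ) ∈ Ipos ε :=
  mem_Ipos_iff.2 ⟨mem_Iset_iff.2 ⟨by omega, hB, odd_one⟩, one_pos⟩

lemma neg_Bval_mem_Ineg {ε : ℝ} (hB : 1 ≤ Bval ε) : -Bval ε ∈ Ineg ε :=
  mem_Ineg_iff.2 ⟨mem_Iset_iff.2 ⟨le_rfl, by omega, (odd_Bval ε).neg⟩, by omega⟩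

lemma card_Ineg_le {ε : ℝ} (hB : 0 ≤ Bval ε) : ((Ineg ε).card : ℤ) ≤ Bval ε := by
  have hsub : Ineg ε ⊆ Icc (-Bval ε) (-1) := fun j hj => by
    obtain ⟨hjI, hj0⟩ := mem_Ineg_iff.1 hj
    exact mem_Icc.2 ⟨(mem_Iset_iff.1 hjI).1, by omega⟩
  have h := card_le_card hsub
  rw [Int.card_Icc, show -1 + 1 - -Bval ε = Bval ε by ring] at h
  omega

lemma one_div_le_two_zpow_ceil_logb {x : ℝ} (hx : 0 < x) :
    1 / x ≤ (2 : ℝ) ^ ⌈Real.logb 2 (1 / x)⌉ := by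
  have h := Real.ceil_logb_natCast (b := 2) (r := 1 / x) (by positivity)
  rw [Nat.cast_ofNat] at h
  rw [h]
  exact_mod_cast Int.self_le_zpow_clog one_lt_two (1 / x)

lemma thirteen_le_Bval {ε : ℝ} (hε : ε ∈ Set.Ioo (0 : ℝ) (1 / 32)) : 13 ≤ Bval ε := by
  have h32 : (2 : ℝ) ^ (5 : ℤ) < 2 ^ ⌈Real.logb 2 (1 / ε)⌉ :=
    calc (2 : ℝ) ^ (5 : ℤ) < 1 / ε := by rw [lt_one_div (by norm_num) hε.1]; norm_num [hε.2]
      _ ≤ _ := one_div_le_two_zpow_ceil_logb hε.1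
  have := (zpow_lt_zpow_iff_right₀ one_lt_two).1 h32
  unfold Bval; omega

lemma two_zpow_neg_Bval_le {ε : ℝ} (hε : 0 < ε) : (2 : ℝ) ^ (-Bval ε) ≤ ε ^ 2 / 2 := by
  set c := ⌈Real.logb 2 (1 / ε)⌉
  have hc : 1 / ε ≤ (2 : ℝ) ^ c := one_div_le_two_zpow_ceil_logb hε
  have h2c : (2 : ℝ) ^ (-Bval ε) = ((2 : ℝ) ^ c)⁻¹ ^ 2 / 2 := by
    rw [show -Bval ε = c * (-2) + (-1) by unfold Bval; ring, zpow_add₀ two_ne_zero, zpow_mul]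
    simp only [zpow_neg, inv_pow, zpow_ofNat, pow_one, div_eq_mul_inv]
  rw [h2c]
  gcongr
  rwa [inv_le_comm₀ (by positivity) hε, ← one_div]

namespace MProcess

variable {ε : ℝ} (P : MProcess ε)

lemma p_nonneg (t : ℕ) (i : ℤ) : 0 ≤ P.p t i := (P.q_nonneg t i).trans (P.q_le_p t i)

lemma sum_mul_p_succ (g : ℤ → ℝ) {t : ℕ} (ht : 1 ≤ t) :
    ∑ i ∈ Iset ε, g i * P.p (t + 1) i =
      ∑ j ∈ Iset ε, (g (max (j - 2) (-Bval ε)) * P.q t j +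
        g (min (j + 2) (Bval ε)) * (P.p t j - P.q t j)) := by
  have hfiber : ∀ i ∈ Iset ε, g i * P.p (t + 1) i =
      ∑ j ∈ (Iset ε).filter (fun j => max (j - 2) (-Bval ε) = i),
          g (max (j - 2) (-Bval ε)) * P.q t j +
        ∑ j ∈ (Iset ε).filter (fun j => min (j + 2) (Bval ε) = i),
          g (min (j + 2) (Bval ε)) * (P.p t j - P.q t j) := fun i hi => by
    rw [P.update t ht i hi, mul_add, mul_sum, mul_sum]
    congr 1 <;> exact sum_congr rfl fun j hj => by rw [(mem_filter.1 hj).2]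
  rw [sum_congr rfl hfiber, sum_add_distrib,
    sum_fiberwise_of_maps_to (fun _ => max_sub_two_mem_Iset),
    sum_fiberwise_of_maps_to (fun _ => min_add_two_mem_Iset), ← sum_add_distrib]

lemma sum_p_eq_one (h1 : ∑ i ∈ Iset ε, P.p 1 i = 1) {t : ℕ} (ht : 1 ≤ t) :
    ∑ i ∈ Iset ε, P.p t i = 1 := by
  induction t, ht using Nat.le_induction with
  | base => exact h1
  | succ t ht ih =>
    simpa using (sum_mul_p_succ P (fun _ => 1) ht).trans (by simpa using ih)

lemma p_le_one (h1 : ∑ i ∈ Iset ε, P.p 1 i = 1) {t : ℕ} (ht : 1 ≤ t) {i : ℤ}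
    (hi : i ∈ Iset ε) : P.p t i ≤ 1 :=
  P.sum_p_eq_one h1 ht ▸ single_le_sum (fun j _ => P.p_nonneg t j) hi

noncomputable def carriedWeight (t : ℕ) (j : ℤ) : ℝ :=
  weight (max (j - 2) (-Bval ε)) * P.q t j + weight (min (j + 2) (Bval ε)) * (P.p t j - P.q t j)

lemma Wfun_eq_sum_weight_mul (t : ℕ) : Wfun ε P t = ∑ i ∈ Iset ε, weight i * P.p t i := by
  rw [Wfun, sum_Iset_eq_sum_Ineg_add_sum_Ipos]
  congr 1 <;> refine sum_congr rfl fun i hi => ?_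
  · rw [weight_of_neg (mem_Ineg_iff.1 hi).2]
  · rw [weight_of_nonneg (mem_Ipos_iff.1 hi).2.le, one_mul]

lemma Wfun_succ {t : ℕ} (ht : 1 ≤ t) :
    Wfun ε P (t + 1) = ∑ j ∈ Ineg ε, P.carriedWeight t j + ∑ j ∈ Ipos ε, P.carriedWeight t j := by
  rw [Wfun_eq_sum_weight_mul, sum_mul_p_succ P weight ht, sum_Iset_eq_sum_Ineg_add_sum_Ipos]
  rfl

lemma carriedWeight_of_mem_Ipos {t : ℕ} {j : ℤ} (hj : j ∈ Ipos ε) (hj1 : j ≠ 1) :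
    P.carriedWeight t j = P.p t j := by
  obtain ⟨hjI, hj0⟩ := mem_Ipos_iff.1 hj
  obtain ⟨-, hjB, k, rfl⟩ := mem_Iset_iff.1 hjI
  rw [carriedWeight, weight_of_nonneg (le_max_of_le_left (by omega)),
    weight_of_nonneg (le_min (by omega) (by omega))]
  ring

lemma carriedWeight_one {t : ℕ} (hB : 3 ≤ Bval ε) :
    P.carriedWeight t 1 = P.p t 1 - P.q t 1 / 2 := by
  rw [carriedWeight, max_eq_left (by omega), min_eq_left (by omega), weight_of_neg (by norm_num),
    weight_of_nonneg (by norm_num)]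
  norm_num
  ring

lemma sum_Ipos_carriedWeight {t : ℕ} (hB : 3 ≤ Bval ε) :
    ∑ j ∈ Ipos ε, P.carriedWeight t j = ∑ j ∈ Ipos ε, P.p t j - P.q t 1 / 2 := by
  have h1 := one_mem_Ipos (by omega : 1 ≤ Bval ε)
  rw [sum_eq_sum_sdiff_singleton_add h1, sum_eq_sum_sdiff_singleton_add h1 (P.p t),
    carriedWeight_one P hB, sum_congr rfl fun j hj => P.carriedWeight_of_mem_Ipos
      (mem_sdiff.1 hj).1 (by simpa using (mem_sdiff.1 hj).2)]
  ring

lemma carriedWeight_le_of_mem_Ineg {t : ℕ} {j : ℤ} (hj : j ∈ Ineg ε) :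
    P.carriedWeight t j ≤
      weight (max (j - 2) (-Bval ε)) * P.q t j + 4 * 2 ^ j * (P.p t j - P.q t j) := by
  obtain ⟨hjI, hj0⟩ := mem_Ineg_iff.1 hj
  have hup : weight (min (j + 2) (Bval ε)) ≤ 4 * 2 ^ j :=
    (weight_mono (min_le_left _ _)).trans ((weight_add_two_le j).trans_eq (by
      rw [weight_of_neg hj0]))
  unfold carriedWeight
  gcongr
  linarith [P.q_le_p t j]

lemma carriedWeight_neg_Bval_le (t : ℕ) (hB : 1 ≤ Bval ε) :
    P.carriedWeight t (-Bval ε) ≤ 4 * 2 ^ (-Bval ε) * P.p t (-Bval ε) := by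
  have h := P.carriedWeight_le_of_mem_Ineg (t := t) (neg_Bval_mem_Ineg hB)
  rw [max_eq_right (by omega), weight_of_neg (by omega)] at h
  have : (0 : ℝ) < 2 ^ (-Bval ε) := by positivity
  nlinarith [P.q_nonneg t (-Bval ε)]

lemma carriedWeight_le_of_mem_Ineg_of_ne {t : ℕ} (ht : 1 ≤ t) {j : ℤ} (hj : j ∈ Ineg ε)
    (hjB : j ≠ -Bval ε) :
    P.carriedWeight t j ≤ 2 ^ j * P.p t j / 2 + 2 * (∑ i ∈ Ipos ε, P.p t i) / Bval ε ^ 4 := by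
  obtain ⟨hjI, hj0⟩ := mem_Ineg_iff.1 hj
  have hdown : weight (max (j - 2) (-Bval ε)) = 2 ^ j / 4 := by
    obtain ⟨hlo, -, k, rfl⟩ := mem_Iset_iff.1 hjI
    obtain ⟨m, hm⟩ := odd_Bval ε
    rw [max_eq_left (by omega), weight_sub_two hj0, weight_of_neg hj0]
  have h := P.carriedWeight_le_of_mem_Ineg (t := t) hj
  rw [hdown] at h
  have h2j : (0 : ℝ) < 2 ^ j := by positivity
  have hq0 := P.q_nonneg t j
  by_cases hheavy : 1 / (Bval ε : ℝ) ^ 4 * ∑ i ∈ Ipos ε, P.p t i ≤ P.p t j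
  · have hup := P.up_small t ht j hj hheavy
    have hhalf : P.carriedWeight t j ≤ 2 ^ j * P.p t j / 2 := by nlinarith
    have hS : 0 ≤ ∑ i ∈ Ipos ε, P.p t i := sum_nonneg fun i _ => P.p_nonneg t i
    have : 0 ≤ 2 * (∑ i ∈ Ipos ε, P.p t i) / Bval ε ^ 4 := by positivity
    linarith
  · have hlight : P.p t j ≤ (∑ i ∈ Ipos ε, P.p t i) / Bval ε ^ 4 := by
      simpa only [one_div_mul_eq_div] using (not_le.1 hheavy).le
    have h2j_le : (2 : ℝ) ^ j ≤ 1 / 2 := by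
      simpa using zpow_le_zpow_right₀ (one_le_two : (1 : ℝ) ≤ 2) (show j ≤ -1 by omega)
    calc P.carriedWeight t j ≤ 4 * 2 ^ j * P.p t j := by nlinarith
      _ ≤ 2 * P.p t j := by nlinarith [P.p_nonneg t j]
      _ ≤ 2 * (∑ i ∈ Ipos ε, P.p t i) / Bval ε ^ 4 := by rw [mul_div_assoc]; gcongr
      _ ≤ _ := by nlinarith [P.p_nonneg t j]

lemma sum_Ineg_carriedWeight_le (h1 : ∑ i ∈ Iset ε, P.p 1 i = 1) {t : ℕ} (ht : 1 ≤ t)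
    (hB : 1 ≤ Bval ε) :
    ∑ j ∈ Ineg ε, P.carriedWeight t j ≤
      (∑ i ∈ Ineg ε, 2 ^ i * P.p t i) / 2 + 2 * (∑ i ∈ Ipos ε, P.p t i) / Bval ε ^ 3 +
        4 * 2 ^ (-Bval ε) := by
  set S := ∑ i ∈ Ipos ε, P.p t i
  have hS : 0 ≤ S := sum_nonneg fun i _ => P.p_nonneg t i
  have hbot := neg_Bval_mem_Ineg hB
  have hcard : ((Ineg ε).card : ℝ) ≤ Bval ε := by exact_mod_cast card_Ineg_le (by omega)
  have hrest : ∑ j ∈ Ineg ε \ {-Bval ε}, P.carriedWeight t j ≤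
      (∑ i ∈ Ineg ε, 2 ^ i * P.p t i) / 2 + 2 * S / Bval ε ^ 3 :=
    calc ∑ j ∈ Ineg ε \ {-Bval ε}, P.carriedWeight t j
        ≤ ∑ j ∈ Ineg ε \ {-Bval ε}, (2 ^ j * P.p t j / 2 + 2 * S / Bval ε ^ 4) :=
          sum_le_sum fun j hj => P.carriedWeight_le_of_mem_Ineg_of_ne ht (mem_sdiff.1 hj).1
            (by simpa using (mem_sdiff.1 hj).2)
      _ ≤ ∑ j ∈ Ineg ε, (2 ^ j * P.p t j / 2 + 2 * S / Bval ε ^ 4) :=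
          sum_le_sum_of_subset_of_nonneg sdiff_subset fun j _ _ => by
            have := P.p_nonneg t j; positivity
      _ = (∑ i ∈ Ineg ε, 2 ^ i * P.p t i) / 2 + (Ineg ε).card * (2 * S / Bval ε ^ 4) := by
          rw [sum_add_distrib, ← sum_div, sum_const, nsmul_eq_mul]
      _ ≤ (∑ i ∈ Ineg ε, 2 ^ i * P.p t i) / 2 + Bval ε * (2 * S / Bval ε ^ 4) := by
          gcongr
      _ = (∑ i ∈ Ineg ε, 2 ^ i * P.p t i) / 2 + 2 * S / Bval ε ^ 3 := by
          field_simp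
  have hbottom : P.carriedWeight t (-Bval ε) ≤ 4 * 2 ^ (-Bval ε) :=
    (P.carriedWeight_neg_Bval_le t hB).trans (mul_le_of_le_one_right (by positivity)
      (P.p_le_one h1 ht (mem_Ineg_iff.1 hbot).1))
  rw [sum_eq_sum_sdiff_singleton_add hbot]
  linarith

lemma Wfun_succ_le (h1 : ∑ i ∈ Iset ε, P.p 1 i = 1) {t : ℕ} (ht : 1 ≤ t) (hB : 3 ≤ Bval ε) :
    Wfun ε P (t + 1) ≤
      (∑ i ∈ Ineg ε, 2 ^ i * P.p t i) / 2 + 2 * (∑ i ∈ Ipos ε, P.p t i) / Bval ε ^ 3 +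
        4 * 2 ^ (-Bval ε) + (∑ i ∈ Ipos ε, P.p t i - P.q t 1 / 2) := by
  rw [P.Wfun_succ ht, P.sum_Ipos_carriedWeight hB]
  linarith [P.sum_Ineg_carriedWeight_le h1 ht (by omega)]

end MProcess

lemma add_le_one_sub_inv_mul {b ε N S q x : ℝ} (hb : 13 ≤ b) (hε : ε ∈ Set.Ioo (0 : ℝ) (1 / 32))
    (hN : 0 ≤ N) (hS : 0 ≤ S) (hq : 1 / (2 * b) * S ≤ q) (hW : 16 * ε * b ≤ N + S)
    (hx : x ≤ ε ^ 2 / 2) :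
    N / 2 + 2 * S / b ^ 3 + 4 * x + (S - q / 2) ≤ (1 - 1 / (9 * b)) * (N + S) := by
  obtain ⟨hε0, hε1⟩ := hε
  set v := 1 / b with hv
  have hv0 : 0 < v := by positivity
  have hv13 : v ≤ 1 / 13 := one_div_le_one_div_of_le (by norm_num) hb
  have hcube : 2 * S / b ^ 3 ≤ 2 / 169 * (S * v) := by
    rw [hv, div_le_iff₀ (by positivity)]
    field_simp
    nlinarith [mul_le_mul_of_nonneg_left (show (169 : ℝ) ≤ b ^ 2 by nlinarith) hS]
  have hε_le : ε ≤ (N * v + S * v) / 16 := by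
    rw [hv]; field_simp; linarith
  have hq' : S * v / 2 ≤ q := by rw [hv]; convert hq using 1; ring
  have hx' : 4 * x ≤ ε / 16 := by nlinarith
  have hrhs : (1 - 1 / (9 * b)) * (N + S) = N + S - (N * v + S * v) / 9 := by rw [hv]; ring
  rw [hrhs]
  nlinarith [mul_le_mul_of_nonneg_left hv13 hN, mul_nonneg hS hv0.le]

/-- Case 2 of the proof of Lemma 3: if at step `t` the mass `δ_{+,-}^t`
moving from `+1` to `-1` is at least `(1/(2B_ε)) Σ_{j ∈ I_ε⁺} p_j^t` and `W_t ≥ 16 ε B_ε`, then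
`W_{t+1} ≤ (1 - 1/(9B_ε)) W_t`. -/
theorem stmt3 :
    ∀ ε : ℝ, ε ∈ Set.Ioo (0 : ℝ) (1 / 32) →
      ∀ P : MProcess ε, (∑ i ∈ Iset ε, P.p 1 i) = 1 →
        ∀ t : ℕ, 1 ≤ t →
          (1 / (2 * (Bval ε : ℝ))) * (∑ j ∈ Ipos ε, P.p t j) ≤ P.q t 1 →
          16 * ε * (Bval ε : ℝ) ≤ Wfun ε P t →
          Wfun ε P (t + 1) ≤ (1 - 1 / (9 * (Bval ε : ℝ))) * Wfun ε P t := by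
  intro ε hε P h1 t ht hq hW
  have hB := thirteen_le_Bval hε
  refine (P.Wfun_succ_le h1 ht (by omega)).trans (add_le_one_sub_inv_mul (by exact_mod_cast hB) hε
    (sum_nonneg fun i _ => mul_nonneg (by positivity) (P.p_nonneg t i))
    (sum_nonneg fun i _ => P.p_nonneg t i) hq hW (two_zpow_neg_Bval_le hε.1))
end

section
/- For every ε ∈ (0,1), every process on I_ε with Σ_{i ∈ I_ε} p_i^1 = 1, and every step t: if Σ_{j ∈ I_ε⁺} p_j^t > 0, Σ_{j ∈ I_ε⁺} p_j^{t+1} > 0, and both δ_{−,+}^t < (1/(2B_ε)) · Σ_{j ∈ I_ε⁺} p_j^t and δ_{+,−}^t < (1/(2B_ε)) · Σ_{j ∈ I_ε⁺} p_j^t, then M_{t+1} ≤ M_t − 1. -/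
/-- `M_t := (Σ_{i ∈ I_ε⁺} i p_i^t) / (Σ_{i ∈ I_ε⁺} p_i^t)` (defined when the denominator is
positive). -/
noncomputable def Mfun (ε : ℝ) (P : MProcess ε) (t : ℕ) : ℝ :=
  (∑ i ∈ Ipos ε, (i : ℝ) * P.p t i) / (∑ i ∈ Ipos ε, P.p t i)

lemma Bodd (ε : ℝ) : Bval ε % 2 = 1 := by unfold Bval; omega

lemma three_le_B {ε : ℝ} (hε : ε ∈ Set.Ioo (0:ℝ) 1) : 3 ≤ Bval ε := by
  have h1 : (0:ℝ) < Real.logb 2 (1/ε) :=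
    Real.logb_pos (by norm_num) ((one_lt_div hε.1).mpr hε.2)
  have h2 : 0 < ⌈Real.logb 2 (1/ε)⌉ := Int.ceil_pos.mpr h1
  unfold Bval; omega

lemma mem_Iset {ε : ℝ} {j : ℤ} :
    j ∈ Iset ε ↔ -(Bval ε) ≤ j ∧ j ≤ Bval ε ∧ j % 2 = 1 := by
  simp [Iset, Finset.mem_filter, Finset.mem_Icc, Int.odd_iff, and_assoc]

lemma mem_Ipos {ε : ℝ} {j : ℤ} :
    j ∈ Ipos ε ↔ (-(Bval ε) ≤ j ∧ j ≤ Bval ε ∧ j % 2 = 1) ∧ 0 < j := by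
  simp [Ipos, Finset.mem_filter, mem_Iset]

lemma filter_down_eq (ε : ℝ) (hB : 3 ≤ Bval ε) :
    (Iset ε).filter (fun j => max (j - 2) (-(Bval ε)) ∈ Ipos ε)
      = (Iset ε).filter (fun j => 3 ≤ j) := by
  ext j
  simp only [Finset.mem_filter, mem_Iset, mem_Ipos]
  have := Bodd ε
  omega

lemma filter_up_mem_eq (ε : ℝ) (hB : 3 ≤ Bval ε) :
    (Iset ε).filter (fun j => min (j + 2) (Bval ε) ∈ Ipos ε)
      = (Iset ε).filter (fun j => -1 ≤ j) := by
  ext j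
  simp only [Finset.mem_filter, mem_Iset, mem_Ipos]
  have := Bodd ε
  omega

lemma Ipos_eq_insert (ε : ℝ) (hB : 3 ≤ Bval ε) :
    Ipos ε = insert 1 ((Iset ε).filter (fun j => 3 ≤ j)) := by
  ext j
  simp only [Finset.mem_insert, Finset.mem_filter, mem_Iset, mem_Ipos]
  have := Bodd ε
  omega

lemma filter_neg_one_eq (ε : ℝ) (hB : 3 ≤ Bval ε) :
    (Iset ε).filter (fun j => -1 ≤ j) = insert (-1) (Ipos ε) := by
  ext j
  simp only [Finset.mem_insert, Finset.mem_filter, mem_Iset, mem_Ipos]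
  have := Bodd ε
  omega

lemma one_notMem_filter (ε : ℝ) : (1:ℤ) ∉ (Iset ε).filter (fun j => 3 ≤ j) := by
  simp only [Finset.mem_filter, not_and]
  intro _
  omega

lemma neg_one_notMem_Ipos (ε : ℝ) : (-1:ℤ) ∉ Ipos ε := by
  simp only [mem_Ipos]
  omega


/-- Case 3 of the proof of Lemma 3: if there is positive mass on `I_ε⁺` at
steps `t` and `t+1`, and both `δ_{-,+}^t` and `δ_{+,-}^t` are smaller than
`(1/(2B_ε)) Σ_{j ∈ I_ε⁺} p_j^t`, then `M_{t+1} ≤ M_t - 1`. -/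
theorem stmt4 :
    ∀ ε : ℝ, ε ∈ Set.Ioo (0 : ℝ) 1 →
      ∀ P : MProcess ε, (∑ i ∈ Iset ε, P.p 1 i) = 1 →
        ∀ t : ℕ, 1 ≤ t →
          0 < (∑ j ∈ Ipos ε, P.p t j) →
          0 < (∑ j ∈ Ipos ε, P.p (t + 1) j) →
          P.p t (-1) - P.q t (-1) < (1 / (2 * (Bval ε : ℝ))) * (∑ j ∈ Ipos ε, P.p t j) →
          P.q t 1 < (1 / (2 * (Bval ε : ℝ))) * (∑ j ∈ Ipos ε, P.p t j) →
          Mfun ε P (t + 1) ≤ Mfun ε P t - 1 := by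
  intro ε hε P _hinit t ht hSpos hS'pos hdlt hq1lt
  have hB : 3 ≤ Bval ε := three_le_B hε
  have hBr : (3:ℝ) ≤ (Bval ε : ℝ) := by exact_mod_cast hB
  have hp0 : ∀ i, 0 ≤ P.p t i := fun i => le_trans (P.q_nonneg t i) (P.q_le_p t i)
  have hsub : Ipos ε ⊆ Iset ε := Finset.filter_subset _ _
  have hnot1 := one_notMem_filter ε
  have hnotm1 := neg_one_notMem_Ipos ε
  simp only [Mfun]
  set S := ∑ j ∈ Ipos ε, P.p t j with hS_def
  set D := ∑ j ∈ Ipos ε, P.q t j with hD_def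
  set N := ∑ i ∈ Ipos ε, (i:ℝ) * P.p t i with hN_def
  have hD_split : D = P.q t 1 + ∑ j ∈ (Iset ε).filter (fun j => 3 ≤ j), P.q t j := by
    rw [hD_def, Ipos_eq_insert ε hB, Finset.sum_insert hnot1]
  have hPQ_split : ∑ j ∈ (Iset ε).filter (fun j => -1 ≤ j), (P.p t j - P.q t j)
      = (P.p t (-1) - P.q t (-1)) + (S - D) := by
    rw [filter_neg_one_eq ε hB, Finset.sum_insert hnotm1, Finset.sum_sub_distrib,
      ← hS_def, ← hD_def]
  -- the value of the new positive mass
  have hS'val : ∑ i ∈ Ipos ε, P.p (t + 1) i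
      = S - P.q t 1 + (P.p t (-1) - P.q t (-1)) := by
    have h1 : ∑ i ∈ Ipos ε, P.p (t + 1) i
        = (∑ j ∈ (Iset ε).filter (fun j => max (j - 2) (-(Bval ε)) ∈ Ipos ε), P.q t j)
        + ∑ j ∈ (Iset ε).filter (fun j => min (j + 2) (Bval ε) ∈ Ipos ε),
            (P.p t j - P.q t j) := by
      rw [← Finset.sum_fiberwise_eq_sum_filter (Iset ε) (Ipos ε)
            (fun j => max (j - 2) (-(Bval ε))) (P.q t),
          ← Finset.sum_fiberwise_eq_sum_filter (Iset ε) (Ipos ε)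
            (fun j => min (j + 2) (Bval ε)) (fun j => P.p t j - P.q t j),
          ← Finset.sum_add_distrib]
      exact Finset.sum_congr rfl (fun i hi => P.update t ht i (hsub hi))
    rw [h1, filter_down_eq ε hB, filter_up_mem_eq ε hB, hPQ_split]
    linarith [hD_split]
  -- bound for the new first moment
  have hN'le : ∑ i ∈ Ipos ε, (i:ℝ) * P.p (t + 1) i
      ≤ N + 2*S - 4*D + P.q t 1 + (P.p t (-1) - P.q t (-1)) := by
    have h1 : ∑ i ∈ Ipos ε, (i:ℝ) * P.p (t + 1) i
        = (∑ j ∈ (Iset ε).filter (fun j => max (j - 2) (-(Bval ε)) ∈ Ipos ε),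
            ((max (j - 2) (-(Bval ε)) : ℤ) : ℝ) * P.q t j)
        + ∑ j ∈ (Iset ε).filter (fun j => min (j + 2) (Bval ε) ∈ Ipos ε),
            ((min (j + 2) (Bval ε) : ℤ) : ℝ) * (P.p t j - P.q t j) := by
      rw [← Finset.sum_fiberwise_eq_sum_filter (Iset ε) (Ipos ε)
            (fun j => max (j - 2) (-(Bval ε)))
            (fun j => ((max (j - 2) (-(Bval ε)) : ℤ) : ℝ) * P.q t j),
          ← Finset.sum_fiberwise_eq_sum_filter (Iset ε) (Ipos ε)
            (fun j => min (j + 2) (Bval ε))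
            (fun j => ((min (j + 2) (Bval ε) : ℤ) : ℝ) * (P.p t j - P.q t j)),
          ← Finset.sum_add_distrib]
      refine Finset.sum_congr rfl (fun i hi => ?_)
      rw [P.update t ht i (hsub hi), mul_add, Finset.mul_sum, Finset.mul_sum]
      congr 1
      · exact Finset.sum_congr rfl (fun j hj => by rw [(Finset.mem_filter.mp hj).2])
      · exact Finset.sum_congr rfl (fun j hj => by rw [(Finset.mem_filter.mp hj).2])
    have h2 : ∑ j ∈ (Iset ε).filter (fun j => max (j - 2) (-(Bval ε)) ∈ Ipos ε),
          ((max (j - 2) (-(Bval ε)) : ℤ) : ℝ) * P.q t j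
        = ∑ j ∈ (Iset ε).filter (fun j => 3 ≤ j), ((j:ℝ) - 2) * P.q t j := by
      rw [filter_down_eq ε hB]
      refine Finset.sum_congr rfl (fun j hj => ?_)
      have h3 : 3 ≤ j := (Finset.mem_filter.mp hj).2
      rw [max_eq_left (by omega : -(Bval ε) ≤ j - 2)]
      push_cast
      ring
    have h4 : ∑ j ∈ (Iset ε).filter (fun j => min (j + 2) (Bval ε) ∈ Ipos ε),
          ((min (j + 2) (Bval ε) : ℤ) : ℝ) * (P.p t j - P.q t j)
        ≤ ∑ j ∈ (Iset ε).filter (fun j => -1 ≤ j), ((j:ℝ) + 2) * (P.p t j - P.q t j) := by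
      rw [filter_up_mem_eq ε hB]
      refine Finset.sum_le_sum (fun j _ => ?_)
      have hc : ((min (j + 2) (Bval ε) : ℤ) : ℝ) ≤ (j:ℝ) + 2 := by
        exact_mod_cast min_le_left (j + 2) (Bval ε)
      exact mul_le_mul_of_nonneg_right hc (sub_nonneg.mpr (P.q_le_p t j))
    have h5 : ∑ j ∈ Ipos ε, ((j:ℝ) - 2) * P.q t j
        = (((1:ℤ):ℝ) - 2) * P.q t 1
          + ∑ j ∈ (Iset ε).filter (fun j => 3 ≤ j), ((j:ℝ) - 2) * P.q t j := by
      rw [Ipos_eq_insert ε hB, Finset.sum_insert hnot1]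
    have h6 : ∑ j ∈ (Iset ε).filter (fun j => -1 ≤ j), ((j:ℝ) + 2) * (P.p t j - P.q t j)
        = ((((-1):ℤ):ℝ) + 2) * (P.p t (-1) - P.q t (-1))
          + ∑ j ∈ Ipos ε, ((j:ℝ) + 2) * (P.p t j - P.q t j) := by
      rw [filter_neg_one_eq ε hB, Finset.sum_insert hnotm1]
    have h8 : ∑ j ∈ Ipos ε, ((j:ℝ) - 2) * P.q t j
          + ∑ j ∈ Ipos ε, ((j:ℝ) + 2) * (P.p t j - P.q t j)
        = N + 2*S - 4*D := by
      rw [← Finset.sum_add_distrib]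
      have hpt : ∀ j ∈ Ipos ε, ((j:ℝ) - 2) * P.q t j + ((j:ℝ) + 2) * (P.p t j - P.q t j)
          = ((j:ℝ) * P.p t j + 2 * P.p t j) - 4 * P.q t j := fun j _ => by ring
      rw [Finset.sum_congr rfl hpt, Finset.sum_sub_distrib, Finset.sum_add_distrib,
        ← Finset.mul_sum, ← Finset.mul_sum, ← hS_def, ← hD_def, ← hN_def]
    rw [h1, h2]
    push_cast at h5 h6
    linarith [h4, h5, h6, h8]
  -- numeric facts
  have hNS : S ≤ N := by
    rw [hS_def, hN_def]
    refine Finset.sum_le_sum (fun i hi => ?_)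
    have h1 : (1:ℤ) ≤ i := by have := (mem_Ipos.mp hi).2; omega
    have h1' : (1:ℝ) ≤ (i:ℝ) := by exact_mod_cast h1
    exact le_mul_of_one_le_left (hp0 i) h1'
  have hNB : N ≤ (Bval ε : ℝ) * S := by
    rw [hN_def, hS_def, Finset.mul_sum]
    refine Finset.sum_le_sum (fun i hi => ?_)
    have h1 : i ≤ Bval ε := (mem_Ipos.mp hi).1.2.1
    exact mul_le_mul_of_nonneg_right (by exact_mod_cast h1) (hp0 i)
  have hD15 : (15/16:ℝ) * S ≤ D := by
    rw [hS_def, hD_def]; exact P.mass_down t ht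
  have hq0 : 0 ≤ P.q t 1 := P.q_nonneg t 1
  have hd0 : 0 ≤ P.p t (-1) - P.q t (-1) := sub_nonneg.mpr (P.q_le_p t (-1))
  have h2B : (0:ℝ) < 2 * (Bval ε : ℝ) := by linarith
  have heq : 1 / (2 * (Bval ε : ℝ)) * S * (2 * (Bval ε : ℝ)) = S := by
    field_simp
  have hq2 : P.q t 1 * (2 * (Bval ε : ℝ)) ≤ S := by
    have h := mul_lt_mul_of_pos_right hq1lt h2B
    linarith
  have hd2 : (P.p t (-1) - P.q t (-1)) * (2 * (Bval ε : ℝ)) ≤ S := by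
    have h := mul_lt_mul_of_pos_right hdlt h2B
    linarith
  -- finish
  rw [div_le_iff₀ hS'pos, hS'val]
  set M := N / S with hM_def
  have hM : M * S = N := div_mul_cancel₀ N (ne_of_gt hSpos)
  have hM1 : 1 ≤ M := by rw [hM_def, le_div_iff₀ hSpos]; linarith
  have hMB : M ≤ (Bval ε : ℝ) := by rw [hM_def, div_le_iff₀ hSpos]; linarith
  have f1 : 0 ≤ P.q t 1 * ((Bval ε : ℝ) - M) := mul_nonneg hq0 (by linarith)
  have f2 : 0 ≤ (P.p t (-1) - P.q t (-1)) * (M - 1) := mul_nonneg hd0 (by linarith)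
  have f3 : 0 ≤ (P.p t (-1) - P.q t (-1)) * (2 * (Bval ε : ℝ) - 6) :=
    mul_nonneg hd0 (by linarith)
  calc ∑ i ∈ Ipos ε, (i:ℝ) * P.p (t + 1) i
      ≤ N + 2*S - 4*D + P.q t 1 + (P.p t (-1) - P.q t (-1)) := hN'le
    _ ≤ (M - 1) * (S - P.q t 1 + (P.p t (-1) - P.q t (-1))) := by
        nlinarith [f1, f2, f3, hq2, hd2, hD15, hSpos.le, hM]
end
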